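/- Let n ≥ 2 and A = K[x]/(x^{n+1}) with maximal ideal m = (x). Let U be either span_K{x, x², …, x^{n−1}} (an H-pair of degree d = n) or, when n ≥ 3, span_K{x, x², …, x^{n−2}, x^n} (an H-pair of degree d = n−1). Then the boundary set B = {z ∈ m : z ≠ 0 and z^d ∈ U} equals m² \ {0}, and every element of B is U-equivalent to exactly one of the elements x², x³, …, x^n. In particular B has exactly n−1 U-equivalence classes, so the corresponding hypersurface has exactly n orbits under the induced additive action of U. -/

import Mathlib

/-!
Write `𝔪 = (x)`. If `z ∈ 𝔪` has linear coefficient `c`, then `z ^ d ≡ c ^ d x ^ d` modulo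
`x ^ (d + 1)`, while no element of `U` has an `x ^ d`-component; so `z ^ d ∈ U` forces `c = 0`.
Conversely `𝔪 ^ (2 d) = 0` because `2 d ≥ n + 1`.

A nonzero `z ∈ 𝔪²` can be written `c x ^ k (1 + a)` with `2 ≤ k ≤ n`, `c ≠ 0` and `a ∈ 𝔪`. Since
`exp (u + v) ≡ exp u + v` modulo `v 𝔪`, the congruence `exp u · (1 + a) ≡ 1` can be improved one
power of `x` at a time with `u ∈ span {x, …, x ^ (n - k)} ⊆ U`, and then `exp u · z = c x ^ k`.
The exponent `k` is an invariant, because multiplying by `exp u ∈ 1 + 𝔪` does not change the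
lowest nonzero coefficient.
-/

/-- The exponential of an element of a finite-dimensional `K`-algebra:
`exp a = ∑_{i ≥ 0} a^i / i!`. -/
noncomputable def expn (K : Type*) [Field K] {A : Type*} [CommRing A] [Algebra K A]
    (a : A) : A :=
  ∑ i ∈ Finset.range (Module.finrank K A + 1), ((i.factorial : K)⁻¹) • a ^ i

/-- The truncated polynomial algebra `K[x]/(x^{n+1})`. -/
abbrev TruncPoly (K : Type*) [Field K] (n : ℕ) : Type _ :=
  Polynomial K ⧸ Ideal.span {(Polynomial.X : Polynomial K) ^ (n + 1)}

/-- The image of `x` in `K[x]/(x^{n+1})`. -/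
noncomputable abbrev truncX (K : Type*) [Field K] (n : ℕ) : TruncPoly K n :=
  Ideal.Quotient.mk (Ideal.span {(Polynomial.X : Polynomial K) ^ (n + 1)}) Polynomial.X

lemma pow_succ_sub_pow_succ_mem {R : Type*} [CommRing R] {I : Ideal R} {a b : R} (ha : a ∈ I)
    (hb : b ∈ I) (m : ℕ) : a ^ (m + 1) - b ^ (m + 1) ∈ I ^ m * Ideal.span {a - b} := by
  rw [← geom_sum₂_mul]
  refine Ideal.mul_mem_mul (Ideal.sum_mem _ fun i hi => ?_) (Ideal.mem_span_singleton_self _)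
  have := Ideal.mul_mem_mul (Ideal.pow_mem_pow ha i) (Ideal.pow_mem_pow hb (m + 1 - 1 - i))
  rwa [← pow_add, show i + (m + 1 - 1 - i) = m by simp at hi; omega] at this

lemma span_singleton_pow_mul_span_singleton_pow {R : Type*} [CommRing R] (x : R) (i j : ℕ) :
    Ideal.span {x ^ i} * Ideal.span {x ^ j} = Ideal.span {x ^ (i + j)} := by
  rw [Ideal.span_singleton_mul_span_singleton, pow_add]

section expn

variable {K : Type*} [Field K] {A : Type*} [CommRing A] [Algebra K A]

lemma expn_zero : expn K (0 : A) = 1 := by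
  simp [expn, Finset.sum_range_succ']

-- `expn` truncates its series at `finrank K A`; `hA` keeps the terms of degree `0` and `1`.
lemma expn_add_sub_expn_sub_mem (hA : Module.finrank K A ≠ 0) {I : Ideal A} {u v : A}
    (hu : u ∈ I) (hv : v ∈ I) : expn K (u + v) - expn K u - v ∈ I * Ideal.span {v} := by
  obtain ⟨N, hN⟩ := Nat.exists_eq_succ_of_ne_zero hA
  have hsum : expn K (u + v) - expn K u - v =
      ∑ i ∈ Finset.range N, ((i + 2).factorial : K)⁻¹ • ((u + v) ^ (i + 2) - u ^ (i + 2)) := by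
    rw [expn, expn, hN, Finset.sum_range_succ', Finset.sum_range_succ', Finset.sum_range_succ',
      Finset.sum_range_succ']
    simp only [Finset.sum_sub_distrib, smul_sub, zero_add, pow_zero, pow_one, Nat.factorial_zero,
      Nat.factorial_one, Nat.cast_one, inv_one, one_smul]
    abel
  rw [hsum]
  refine Ideal.sum_mem _ fun i _ => Submodule.smul_of_tower_mem _ _ ?_
  have := pow_succ_sub_pow_succ_mem (I.add_mem hu hv) hu (i + 1)
  rw [add_sub_cancel_left] at this
  exact Ideal.mul_mono_left (Ideal.pow_le_self i.succ_ne_zero) this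

lemma expn_sub_one_mem (hA : Module.finrank K A ≠ 0) {I : Ideal A} {u : A} (hu : u ∈ I) :
    expn K u - 1 ∈ I := by
  have h := expn_add_sub_expn_sub_mem hA I.zero_mem hu
  rw [zero_add, expn_zero] at h
  have h' := I.add_mem (Ideal.mul_le_left h) hu
  rwa [sub_add_cancel] at h'

end expn

namespace TruncPoly

variable {K : Type*} [Field K] {n : ℕ}

variable (K n) in
noncomputable def isAdjoinRootMonic :
    IsAdjoinRootMonic (TruncPoly K n) (Polynomial.X ^ (n + 1) : Polynomial K) :=
  AdjoinRoot.isAdjoinRootMonic _ (Polynomial.monic_X_pow _)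

variable (K n) in
lemma finrank_eq : Module.finrank K (TruncPoly K n) = n + 1 := by
  rw [(isAdjoinRootMonic K n).finrank, Polynomial.natDegree_X_pow]

variable (K n) in
lemma truncX_pow_eq_zero {j : ℕ} (hj : n + 1 ≤ j) : truncX K n ^ j = 0 := by
  rw [← map_pow, Ideal.Quotient.eq_zero_iff_mem]
  exact Ideal.mem_span_singleton.mpr (pow_dvd_pow _ hj)

variable (K) in
lemma span_truncX_pow_eq_bot {j : ℕ} (hj : n + 1 ≤ j) : Ideal.span {truncX K n ^ j} = ⊥ :=
  Ideal.span_singleton_eq_bot.mpr (truncX_pow_eq_zero K n hj)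

variable (n) in
noncomputable def coeff (i : ℕ) : TruncPoly K n →ₗ[K] K :=
  LinearMap.proj i ∘ₗ (isAdjoinRootMonic K n).coeff

lemma coeff_eq_zero_of_lt {i : ℕ} (hi : n < i) (z : TruncPoly K n) : coeff n i z = 0 :=
  (isAdjoinRootMonic K n).coeff_apply_le z i (by rw [Polynomial.natDegree_X_pow]; omega)

lemma coeff_pow_self {i : ℕ} (hi : i ≤ n) : coeff n i (truncX K n ^ i) = 1 := by
  change (isAdjoinRootMonic K n).coeff ((isAdjoinRootMonic K n).root ^ i) i = 1
  rw [IsAdjoinRootMonic.coeff_root_pow _ (by rw [Polynomial.natDegree_X_pow]; omega),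
    Pi.single_eq_same]

lemma coeff_pow_of_ne {i j : ℕ} (hij : i ≠ j) : coeff n i (truncX K n ^ j) = 0 := by
  obtain hj | hj := le_or_gt j n
  · change (isAdjoinRootMonic K n).coeff ((isAdjoinRootMonic K n).root ^ j) i = 0
    rw [IsAdjoinRootMonic.coeff_root_pow _ (by rw [Polynomial.natDegree_X_pow]; omega),
      Pi.single_eq_of_ne hij]
  · rw [truncX_pow_eq_zero K n hj, map_zero]

lemma eq_zero_of_forall_coeff_eq_zero {z : TruncPoly K n} (h : ∀ i, coeff n i z = 0) : z = 0 :=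
  (isAdjoinRootMonic K n).ext_elem fun i _ => by rw [map_zero]; exact h i

lemma sum_coeff_smul_pow (z : TruncPoly K n) :
    ∑ i ∈ Finset.range (n + 1), coeff n i z • truncX K n ^ i = z := by
  refine (isAdjoinRootMonic K n).ext_elem fun i hi => ?_
  rw [Polynomial.natDegree_X_pow] at hi
  change coeff n i _ = coeff n i z
  rw [map_sum, Finset.sum_eq_single i]
  · rw [map_smul, coeff_pow_self (by omega), smul_eq_mul, mul_one]
  · intro j _ hji
    rw [map_smul, coeff_pow_of_ne hji.symm, smul_zero]
  · intro h
    exact absurd (Finset.mem_range.mpr hi) h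

lemma mem_span_pow_iff {k : ℕ} {z : TruncPoly K n} :
    z ∈ Ideal.span {truncX K n ^ k} ↔ ∀ i < k, coeff n i z = 0 := by
  constructor
  · rintro hz i hi
    obtain ⟨w, rfl⟩ := Ideal.mem_span_singleton'.mp hz
    rw [← sum_coeff_smul_pow w, Finset.sum_mul, map_sum]
    refine Finset.sum_eq_zero fun j _ => ?_
    rw [smul_mul_assoc, ← pow_add, map_smul, coeff_pow_of_ne (by omega), smul_zero]
  · intro h
    rw [← sum_coeff_smul_pow z]
    refine Ideal.sum_mem _ fun i _ => ?_
    obtain hik | hki := lt_or_ge i k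
    · rw [h i hik, zero_smul]
      exact zero_mem _
    · exact Submodule.smul_of_tower_mem _ _ (Ideal.mem_span_singleton.mpr (pow_dvd_pow _ hki))

lemma sub_coeff_smul_pow_mem {k : ℕ} {z : TruncPoly K n} (hz : z ∈ Ideal.span {truncX K n ^ k}) :
    z - coeff n k z • truncX K n ^ k ∈ Ideal.span {truncX K n ^ (k + 1)} := by
  rw [mem_span_pow_iff] at hz ⊢
  intro i hi
  rw [map_sub, map_smul, smul_eq_mul]
  obtain hik | rfl := (Nat.lt_succ_iff.mp hi).lt_or_eq
  · rw [hz i hik, coeff_pow_of_ne hik.ne, mul_zero, sub_zero]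
  · obtain hin | hni := le_or_gt i n
    · rw [coeff_pow_self hin, mul_one, sub_self]
    · rw [coeff_eq_zero_of_lt hni z, zero_mul, sub_zero]

lemma coeff_eq_zero_of_mem_span_image {S : Set ℕ} {i : ℕ} (hi : i ∉ S) {y : TruncPoly K n}
    (hy : y ∈ Submodule.span K ((fun j : ℕ => truncX K n ^ j) '' S)) : coeff n i y = 0 := by
  induction hy using Submodule.span_induction with
  | mem y hy =>
    obtain ⟨j, hj, rfl⟩ := hy
    exact coeff_pow_of_ne fun hij => hi (hij ▸ hj)
  | zero => exact map_zero _
  | add y w _ _ hy hw => rw [map_add, hy, hw, add_zero]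
  | smul c y _ hy => rw [map_smul, hy, smul_zero]

lemma mem_span_of_mem_span_image {S : Set ℕ} (hS : 0 ∉ S) {y : TruncPoly K n}
    (hy : y ∈ Submodule.span K ((fun j : ℕ => truncX K n ^ j) '' S)) :
    y ∈ Ideal.span {truncX K n} := by
  rw [← pow_one (truncX K n), mem_span_pow_iff]
  intro i hi
  obtain rfl : i = 0 := by omega
  exact coeff_eq_zero_of_mem_span_image hS hy

lemma coeff_pow_eq_coeff_one_pow {z : TruncPoly K n} (hz : z ∈ Ideal.span {truncX K n}) {d : ℕ}
    (hd : d ≤ n) : coeff n d (z ^ d) = coeff n 1 z ^ d := by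
  rcases d with _ | e
  · simpa using coeff_pow_self (K := K) (Nat.zero_le n)
  set c := coeff n 1 z
  have hcx : c • truncX K n ∈ Ideal.span {truncX K n} :=
    Submodule.smul_of_tower_mem _ c (Ideal.mem_span_singleton_self _)
  have hrest : z - c • truncX K n ∈ Ideal.span {truncX K n ^ 2} := by
    simpa using sub_coeff_smul_pow_mem (k := 1) (by rwa [pow_one])
  have hdiff : z ^ (e + 1) - (c • truncX K n) ^ (e + 1) ∈ Ideal.span {truncX K n ^ (e + 2)} := by
    have hle : Ideal.span {truncX K n} ^ e * Ideal.span {z - c • truncX K n}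
        ≤ Ideal.span {truncX K n ^ (e + 2)} := by
      rw [Ideal.span_singleton_pow, ← span_singleton_pow_mul_span_singleton_pow _ e 2]
      exact Ideal.mul_mono_right ((Ideal.span_singleton_le_iff_mem _).mpr hrest)
    exact hle (pow_succ_sub_pow_succ_mem hz hcx e)
  have := mem_span_pow_iff.mp hdiff (e + 1) (by omega)
  rwa [map_sub, sub_eq_zero, smul_pow, map_smul, coeff_pow_self hd, smul_eq_mul, mul_one] at this

lemma mem_span_sq_of_coeff_pow_eq_zero {z : TruncPoly K n} (hz : z ∈ Ideal.span {truncX K n})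
    {d : ℕ} (hd : d ≤ n) (h : coeff n d (z ^ d) = 0) : z ∈ Ideal.span {truncX K n} ^ 2 := by
  rw [coeff_pow_eq_coeff_one_pow hz hd] at h
  rw [← pow_one (truncX K n), mem_span_pow_iff] at hz
  rw [Ideal.span_singleton_pow, mem_span_pow_iff]
  intro i hi
  interval_cases i
  exacts [hz 0 one_pos, eq_zero_of_pow_eq_zero h]

lemma pow_eq_zero_of_mem_sq {d : ℕ} (hd : n + 1 ≤ 2 * d) {z : TruncPoly K n}
    (hz : z ∈ Ideal.span {truncX K n} ^ 2) : z ^ d = 0 := by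
  have := Ideal.pow_mem_pow hz d
  rwa [← pow_mul, Ideal.span_singleton_pow, span_truncX_pow_eq_bot K hd, Ideal.mem_bot] at this

lemma mem_span_and_pow_mem_iff_mem_sq {S : Set ℕ} {d : ℕ} (hdS : d ∉ S) (hdn : d ≤ n)
    (h2d : n + 1 ≤ 2 * d) {z : TruncPoly K n} :
    (z ∈ Ideal.span {truncX K n} ∧
      z ^ d ∈ Submodule.span K ((fun j : ℕ => truncX K n ^ j) '' S)) ↔
      z ∈ Ideal.span {truncX K n} ^ 2 :=
  ⟨fun ⟨hz, hzd⟩ => mem_span_sq_of_coeff_pow_eq_zero hz hdn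
      (coeff_eq_zero_of_mem_span_image hdS hzd),
    fun hz => ⟨Ideal.pow_le_self two_ne_zero hz,
      by rw [pow_eq_zero_of_mem_sq h2d hz]; exact zero_mem _⟩⟩

lemma exists_eq_smul_pow_mul_one_add {z : TruncPoly K n} (hz : z ≠ 0) :
    ∃ k ≤ n, ∃ c : K, c ≠ 0 ∧
      ∃ a ∈ Ideal.span {truncX K n}, z = c • (truncX K n ^ k * (1 + a)) := by
  classical
  have hex : ∃ i, coeff n i z ≠ 0 := by
    by_contra! h
    exact hz (eq_zero_of_forall_coeff_eq_zero h)
  set k := Nat.find hex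
  have hk : coeff n k z ≠ 0 := Nat.find_spec hex
  have hzk : z ∈ Ideal.span {truncX K n ^ k} :=
    mem_span_pow_iff.mpr fun i hi => not_not.mp (Nat.find_min hex hi)
  obtain ⟨t, ht⟩ := Ideal.mem_span_singleton.mp (sub_coeff_smul_pow_mem hzk)
  refine ⟨k, not_lt.mp fun hnk => hk (coeff_eq_zero_of_lt hnk z), _, hk,
    (coeff n k z)⁻¹ • (truncX K n * t),
    Submodule.smul_of_tower_mem _ _ (Ideal.mul_mem_right _ _ (Ideal.mem_span_singleton_self _)), ?_⟩
  rw [mul_add, mul_one, mul_smul_comm, ← mul_assoc, ← pow_succ, ← ht, smul_add, smul_smul,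
    mul_inv_cancel₀ hk, one_smul, add_sub_cancel]

lemma smul_pow_mul_one_add_mem_span_pow_iff {k j : ℕ} (hk : k ≤ n) {c : K} (hc : c ≠ 0)
    {a : TruncPoly K n} (ha : a ∈ Ideal.span {truncX K n}) :
    c • (truncX K n ^ k * (1 + a)) ∈ Ideal.span {truncX K n ^ j} ↔ j ≤ k := by
  refine ⟨fun h => not_lt.mp fun hkj => hc ?_, fun hjk => ?_⟩
  · have hxa : truncX K n ^ k * a ∈ Ideal.span {truncX K n ^ (k + 1)} := by
      rw [← span_singleton_pow_mul_span_singleton_pow _ k 1]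
      exact Ideal.mul_mem_mul (Ideal.mem_span_singleton_self _) (by rwa [pow_one])
    have := mem_span_pow_iff.mp h k hkj
    rwa [map_smul, mul_add, mul_one, map_add, coeff_pow_self hk,
      mem_span_pow_iff.mp hxa k k.lt_succ_self, add_zero, smul_eq_mul, mul_one] at this
  · exact Submodule.smul_of_tower_mem _ _ (Ideal.mul_mem_right _ _
      (Ideal.mem_span_singleton.mpr (pow_dvd_pow _ hjk)))

lemma eq_of_smul_pow_mul_one_add_eq {k j : ℕ} (hk : k ≤ n) (hj : j ≤ n) {c c' : K} (hc : c ≠ 0)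
    (hc' : c' ≠ 0) {a b : TruncPoly K n} (ha : a ∈ Ideal.span {truncX K n})
    (hb : b ∈ Ideal.span {truncX K n})
    (h : c • (truncX K n ^ k * (1 + a)) = c' • (truncX K n ^ j * (1 + b))) : k = j := by
  have hjk := (smul_pow_mul_one_add_mem_span_pow_iff hk hc ha).mp
    (h ▸ (smul_pow_mul_one_add_mem_span_pow_iff hj hc' hb).mpr le_rfl)
  have hkj := (smul_pow_mul_one_add_mem_span_pow_iff hj hc' hb).mp
    (h ▸ (smul_pow_mul_one_add_mem_span_pow_iff hk hc ha).mpr le_rfl)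
  omega

lemma pow_mul_eq_pow_of_sub_one_mem {k : ℕ} (hk : k ≤ n) {y : TruncPoly K n}
    (hy : y - 1 ∈ Ideal.span {truncX K n ^ (n - k + 1)}) : truncX K n ^ k * y = truncX K n ^ k := by
  have := Ideal.mul_mem_mul (Ideal.mem_span_singleton_self (truncX K n ^ k)) hy
  rwa [span_singleton_pow_mul_span_singleton_pow, span_truncX_pow_eq_bot K (by omega),
    Ideal.mem_bot, mul_sub, mul_one, sub_eq_zero] at this

-- The correction term cancels the `x ^ (m + 1)`-coefficient of the error, because
-- `exp (u + v) ≡ exp u + v` modulo `v 𝔪`.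
lemma expn_sub_smul_pow_mul_one_add_sub_one_mem {m : ℕ} {u a : TruncPoly K n}
    (hu : u ∈ Ideal.span {truncX K n}) (ha : a ∈ Ideal.span {truncX K n})
    (he : expn K u * (1 + a) - 1 ∈ Ideal.span {truncX K n ^ (m + 1)}) :
    expn K (u - coeff n (m + 1) (expn K u * (1 + a) - 1) • truncX K n ^ (m + 1)) * (1 + a) - 1
      ∈ Ideal.span {truncX K n ^ (m + 2)} := by
  set e := expn K u * (1 + a) - 1
  set v := -(coeff n (m + 1) e • truncX K n ^ (m + 1))
  have hv : v ∈ Ideal.span {truncX K n ^ (m + 1)} :=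
    neg_mem (Submodule.smul_of_tower_mem _ _ (Ideal.mem_span_singleton_self _))
  have hvm : v ∈ Ideal.span {truncX K n} :=
    Ideal.span_singleton_le_span_singleton.mpr (dvd_pow_self _ m.succ_ne_zero) hv
  have hmul : Ideal.span {truncX K n ^ (m + 1)} * Ideal.span {truncX K n}
      = Ideal.span {truncX K n ^ (m + 2)} := by
    rw [← span_singleton_pow_mul_span_singleton_pow _ (m + 1) 1, pow_one]
  have hr := expn_add_sub_expn_sub_mem (by rw [finrank_eq]; omega) hu hvm
  rw [Ideal.mul_comm] at hr
  rw [sub_eq_add_neg u, show expn K (u + v) * (1 + a) - 1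
      = (e + v) + v * a + (expn K (u + v) - expn K u - v) * (1 + a) by ring]
  refine add_mem (add_mem ?_ ?_) (Ideal.mul_mem_right _ _ ?_)
  · simpa [v, ← sub_eq_add_neg] using sub_coeff_smul_pow_mem he
  · exact hmul ▸ Ideal.mul_mem_mul hv ha
  · exact hmul ▸ Ideal.mul_mono_left ((Ideal.span_singleton_le_iff_mem _).mpr hv) hr

lemma exists_expn_mul_one_add_sub_one_mem {a : TruncPoly K n} (ha : a ∈ Ideal.span {truncX K n})
    (m : ℕ) : ∃ u ∈ Submodule.span K ((fun j : ℕ => truncX K n ^ j) '' {j | 1 ≤ j ∧ j ≤ m}),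
      expn K u * (1 + a) - 1 ∈ Ideal.span {truncX K n ^ (m + 1)} := by
  induction m with
  | zero => exact ⟨0, zero_mem _, by simpa [expn_zero] using ha⟩
  | succ m ih =>
    obtain ⟨u, hu, he⟩ := ih
    have huspan : u ∈ Submodule.span K
        ((fun j : ℕ => truncX K n ^ j) '' {j | 1 ≤ j ∧ j ≤ m + 1}) :=
      Submodule.span_mono (Set.image_mono (Set.ofPred_subset_ofPred.mpr fun j hj =>
        ⟨hj.1, by omega⟩)) hu
    have hxspan : truncX K n ^ (m + 1) ∈ Submodule.span K
        ((fun j : ℕ => truncX K n ^ j) '' {j | 1 ≤ j ∧ j ≤ m + 1}) :=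
      Submodule.subset_span (Set.mem_image_of_mem _ ⟨by omega, le_rfl⟩)
    exact ⟨_, sub_mem huspan (Submodule.smul_mem _ _ hxspan),
      expn_sub_smul_pow_mul_one_add_sub_one_mem (mem_span_of_mem_span_image (by simp) hu) ha he⟩

lemma exists_expn_mul_smul_pow_mul_one_add_eq {k : ℕ} (hk : k ≤ n) (c : K) {a : TruncPoly K n}
    (ha : a ∈ Ideal.span {truncX K n}) :
    ∃ u ∈ Submodule.span K ((fun j : ℕ => truncX K n ^ j) '' {j | 1 ≤ j ∧ j ≤ n - k}),
      expn K u * (c • (truncX K n ^ k * (1 + a))) = c • truncX K n ^ k := by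
  obtain ⟨u, hu, hexp⟩ := exists_expn_mul_one_add_sub_one_mem ha (n - k)
  exact ⟨u, hu, by rw [mul_smul_comm, mul_left_comm, pow_mul_eq_pow_of_sub_one_mem hk hexp]⟩

lemma eq_of_expn_mul_smul_pow_mul_one_add_eq {k j : ℕ} (hk : k ≤ n) (hj : j ≤ n) {c c' : K}
    (hc : c ≠ 0) (hc' : c' ≠ 0) {a u : TruncPoly K n} (ha : a ∈ Ideal.span {truncX K n})
    (hu : u ∈ Ideal.span {truncX K n})
    (h : expn K u * (c • (truncX K n ^ k * (1 + a))) = c' • truncX K n ^ j) : k = j := by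
  have ha' : expn K u * (1 + a) - 1 ∈ Ideal.span {truncX K n} := by
    have he := expn_sub_one_mem (by rw [finrank_eq]; omega) hu
    convert Ideal.add_mem _ (Ideal.mul_mem_right (1 + a) _ he) ha using 1
    ring
  refine eq_of_smul_pow_mul_one_add_eq hk hj hc hc' ha' (zero_mem _) ?_
  rw [add_sub_cancel, add_zero, mul_one, ← h, mul_smul_comm, mul_left_comm]

end TruncPoly

open TruncPoly

theorem stmt_16_general (K : Type*) [Field K]
    (n : ℕ) (hn : 2 ≤ n)
    (U : Submodule K (TruncPoly K n)) (d : ℕ)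
    (hcase :
      (U = Submodule.span K
          ((fun j : ℕ => truncX K n ^ j) '' {j : ℕ | 1 ≤ j ∧ j ≤ n - 1}) ∧ d = n) ∨
      (3 ≤ n ∧ U = Submodule.span K
          ((fun j : ℕ => truncX K n ^ j) '' ({j : ℕ | 1 ≤ j ∧ j ≤ n - 2} ∪ {n}))
        ∧ d = n - 1)) :
    {z : TruncPoly K n | z ∈ Ideal.span {truncX K n} ∧ z ≠ 0 ∧ z ^ d ∈ U}
      = {z : TruncPoly K n | z ∈ Ideal.span {truncX K n} ^ 2 ∧ z ≠ 0} ∧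
    ∀ z : TruncPoly K n, z ∈ Ideal.span {truncX K n} → z ≠ 0 → z ^ d ∈ U →
      ∃! w : TruncPoly K n,
        w ∈ ((fun j : ℕ => truncX K n ^ j) '' {j : ℕ | 2 ≤ j ∧ j ≤ n}) ∧
        ∃ u ∈ U, ∃ lam : K, lam ≠ 0 ∧ expn K u * z = lam • w := by
  obtain ⟨hdn, h2d⟩ : d ≤ n ∧ n + 1 ≤ 2 * d := by
    rcases hcase with ⟨-, hd⟩ | ⟨h3, -, hd⟩ <;> omega
  obtain ⟨S, rfl, h0S, hdS, hSn⟩ : ∃ S : Set ℕ,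
      U = Submodule.span K ((fun j : ℕ => truncX K n ^ j) '' S) ∧ 0 ∉ S ∧ d ∉ S ∧
        {j | 1 ≤ j ∧ j ≤ n - 2} ⊆ S := by
    rcases hcase with ⟨hU, hd⟩ | ⟨h3, hU, hd⟩
    · exact ⟨_, hU, by simp, by simp; omega, fun j hj => ⟨hj.1, hj.2.trans (by omega)⟩⟩
    · exact ⟨_, hU, by simp; omega, by simp; omega, fun j hj => Or.inl hj⟩
  have hB (z : TruncPoly K n) := mem_span_and_pow_mem_iff_mem_sq (z := z) hdS hdn h2d
  refine ⟨Set.ext fun z => ?_, fun z hz hz0 hzd => ?_⟩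
  · simp only [Set.mem_ofPred_eq, ← hB z]
    tauto
  obtain ⟨k, hkn, c, hc, a, ha, rfl⟩ := exists_eq_smul_pow_mul_one_add hz0
  have hk2 : 2 ≤ k := by
    have hz2 := (hB _).mp ⟨hz, hzd⟩
    rwa [Ideal.span_singleton_pow, smul_pow_mul_one_add_mem_span_pow_iff hkn hc ha] at hz2
  obtain ⟨u, hu, hexp⟩ := exists_expn_mul_smul_pow_mul_one_add_eq hkn c ha
  refine ⟨truncX K n ^ k, ⟨⟨k, ⟨hk2, hkn⟩, rfl⟩, u, ?_, c, hc, hexp⟩, ?_⟩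
  · exact Submodule.span_mono
      (Set.image_mono fun j (hj : 1 ≤ j ∧ j ≤ n - k) => hSn ⟨hj.1, by omega⟩) hu
  · rintro _ ⟨⟨j, ⟨-, hjn⟩, rfl⟩, u', hu', c', hc', h⟩
    rw [eq_of_expn_mul_smul_pow_mul_one_add_eq hkn hjn hc hc' ha
      (mem_span_of_mem_span_image h0S hu') h]

set_option synthInstance.maxHeartbeats 1000000 in
set_option maxHeartbeats 2000000 in
/-- Let `n ≥ 2` and `A = K[x]/(x^{n+1})` with maximal ideal `m = (x)`.
Let `U` be either `span{x, x², …, x^{n−1}}` (an `H`-pair of degree `d = n`) or, when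
`n ≥ 3`, `span{x, x², …, x^{n−2}, x^n}` (an `H`-pair of degree `d = n−1`).  Then the
boundary set `B = {z ∈ m : z ≠ 0, z^d ∈ U}` equals `m² \ {0}`, and every element of `B`
is `U`-equivalent to exactly one of the elements `x², x³, …, x^n`.  In particular `B` has
exactly `n−1` `U`-equivalence classes. -/
theorem stmt_16 (K : Type*) [Field K] [IsAlgClosed K] [CharZero K]
    (n : ℕ) (hn : 2 ≤ n)
    (U : Submodule K (TruncPoly K n)) (d : ℕ)
    (hcase :
      (U = Submodule.span K
          ((fun j : ℕ => truncX K n ^ j) '' {j : ℕ | 1 ≤ j ∧ j ≤ n - 1}) ∧ d = n) ∨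
      (3 ≤ n ∧ U = Submodule.span K
          ((fun j : ℕ => truncX K n ^ j) '' ({j : ℕ | 1 ≤ j ∧ j ≤ n - 2} ∪ {n}))
        ∧ d = n - 1)) :
    {z : TruncPoly K n | z ∈ Ideal.span {truncX K n} ∧ z ≠ 0 ∧ z ^ d ∈ U}
      = {z : TruncPoly K n | z ∈ Ideal.span {truncX K n} ^ 2 ∧ z ≠ 0} ∧
    ∀ z : TruncPoly K n, z ∈ Ideal.span {truncX K n} → z ≠ 0 → z ^ d ∈ U →
      ∃! w : TruncPoly K n,
        w ∈ ((fun j : ℕ => truncX K n ^ j) '' {j : ℕ | 2 ≤ j ∧ j ≤ n}) ∧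
        ∃ u ∈ U, ∃ lam : K, lam ≠ 0 ∧ expn K u * z = lam • w :=
  stmt_16_general K n hn U d hcase
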